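/- arXiv:2605.08843 — 3 statements merged into one kernel-verified Lean document; each statement's English description precedes it below -/
import Mathlib

section
/- Let Λ be a finite nonempty index set with capacities C_ℓ ∈ ℕ, and let m' ∈ ℕ with m' ≤ ∑_{ℓ∈Λ} C_ℓ. Then there exist an allocation m : Λ → ℕ with ∑_{ℓ∈Λ} m_ℓ = m' and m_ℓ ≤ C_ℓ for every ℓ ∈ Λ, and a threshold t ∈ ℕ such that m_ℓ = min(C_ℓ, t) or m_ℓ = min(C_ℓ, t+1) for every ℓ ∈ Λ. -/
/-- Water-filling (near-uniform) allocation under capacity constraints: there exist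
`m : Λ → ℕ` and a water level `t` with `∑ m ℓ = m'`, `m ℓ ≤ C ℓ`, and every
`m ℓ ∈ {min (C ℓ) t, min (C ℓ) (t+1)}`. -/
theorem stmt7 {Λ : Type*} [Fintype Λ] [Nonempty Λ] (C : Λ → ℕ) (m' : ℕ)
    (hm : m' ≤ ∑ ℓ, C ℓ) :
    ∃ (m : Λ → ℕ) (t : ℕ), (∑ ℓ, m ℓ = m') ∧ (∀ ℓ, m ℓ ≤ C ℓ) ∧
      ∀ ℓ, m ℓ = min (C ℓ) t ∨ m ℓ = min (C ℓ) (t + 1) := by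
  classical
  set g : ℕ → ℕ := fun t => ∑ ℓ, min (C ℓ) t with hg
  by_cases hex : ∃ s, m' < g s
  · have hfind := Nat.find_spec hex
    set s₀ := Nat.find hex with hs₀def
    have hs₀pos : s₀ ≠ 0 := by
      intro h
      have hg0 : g 0 = 0 := by simp [hg]
      rw [h] at hfind
      omega
    obtain ⟨t, hts⟩ : ∃ t, s₀ = t + 1 := ⟨s₀ - 1, by omega⟩
    have hgt : g t ≤ m' := by
      by_contra h
      have := Nat.find_min hex (m := t) (by omega)
      omega
    have hlt : m' < g (t + 1) := by rw [← hts]; exact hfind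
    set A : Finset Λ := Finset.univ.filter (fun ℓ => t < C ℓ) with hA
    have hstep : g (t + 1) = g t + A.card := by
      have : ∀ ℓ, min (C ℓ) (t + 1) = min (C ℓ) t + (if ℓ ∈ A then 1 else 0) := by
        intro ℓ
        by_cases h : t < C ℓ <;> simp [hA, h] <;> omega
      simp only [hg]
      rw [Finset.sum_congr rfl (fun ℓ _ => this ℓ), Finset.sum_add_distrib,
        Finset.sum_ite_mem, Finset.univ_inter, Finset.sum_const, smul_eq_mul, mul_one]
    have hr : m' - g t ≤ A.card := by omega
    obtain ⟨S, hSA, hScard⟩ := Finset.exists_subset_card_eq hr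
    refine ⟨fun ℓ => min (C ℓ) t + (if ℓ ∈ S then 1 else 0), t, ?_, ?_, ?_⟩
    · rw [Finset.sum_add_distrib, Finset.sum_ite_mem, Finset.univ_inter,
        Finset.sum_const, smul_eq_mul, mul_one, hScard]
      have : g t ≤ m' := hgt
      simp only [hg] at this ⊢
      omega
    · intro ℓ
      by_cases h : ℓ ∈ S
      · have : t < C ℓ := by have := hSA h; simp [hA] at this; exact this
        simp only [h, if_true]
        omega
      · simp only [h, if_false]
        omega
    · intro ℓ
      by_cases h : ℓ ∈ S
      · right
        have : t < C ℓ := by have := hSA h; simp [hA] at this; exact this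
        simp only [h, if_true]
        omega
      · left
        simp [h]
  · push_neg at hex
    have hT : g (Finset.univ.sup C) = ∑ ℓ, C ℓ := by
      apply Finset.sum_congr rfl
      intro ℓ _
      exact min_eq_left (Finset.le_sup (Finset.mem_univ ℓ))
    have : m' = ∑ ℓ, C ℓ := le_antisymm hm (hT ▸ hex _)
    refine ⟨C, Finset.univ.sup C, this.symm, fun ℓ => le_refl _, fun ℓ => Or.inl ?_⟩
    exact (min_eq_left (Finset.le_sup (Finset.mem_univ ℓ))).symm
end

section
/- Let C be a finite nonempty set and m ≥ 1 an integer. Among all probability mass vectors p on C of the form p(c) = q_c/m with q_c ∈ ℕ and ∑_c q_c = m, the total variation distance to the uniform distribution u(c) = 1/|C| is minimized by any allocation in which each q_c equals ⌊m/|C|⌋ or ⌈m/|C|⌉. -/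
/-!
Write `t = m / |C|` and `k = ⌊t⌋₊`. On the natural numbers, `x ↦ |x - t|` lies above the
secant line through its values at `k` and `k + 1`: it has slope `-1` to the left of `k` and `+1`
to the right of `k + 1`, while the secant has slope `2k + 1 - 2t ∈ [-1, 1]`. A balanced
allocation takes only the values `k` and `k + 1`, where the two agree, and the sum of an affine
function over an allocation depends only on its budget.
-/

open Finset

theorem sum_le_sum_of_affine_minorant {ι : Type*} (s : Finset ι) (f : ℕ → ℝ) (a b : ℝ)
    (hf : ∀ x, a + b * x ≤ f x) (p q : ι → ℕ) (hp : ∀ i ∈ s, f (p i) = a + b * p i)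
    (hpq : ∑ i ∈ s, p i = ∑ i ∈ s, q i) :
    ∑ i ∈ s, f (p i) ≤ ∑ i ∈ s, f (q i) := by
  have hsum (r : ι → ℕ) :
      ∑ i ∈ s, (a + b * r i) = #s * a + b * ((∑ i ∈ s, r i : ℕ) : ℝ) := by
    rw [sum_add_distrib, ← mul_sum, Nat.cast_sum, sum_const, nsmul_eq_mul]
  calc ∑ i ∈ s, f (p i) = ∑ i ∈ s, (a + b * p i) := sum_congr rfl hp
    _ = ∑ i ∈ s, (a + b * q i) := by rw [hsum, hsum, hpq]
    _ ≤ ∑ i ∈ s, f (q i) := sum_le_sum fun i _ => hf (q i)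

section Secant

variable {t : ℝ} {k : ℕ}

theorem secant_le_abs_natCast_sub (hk : (k : ℝ) ≤ t) (hk' : t ≤ k + 1) (x : ℕ) :
    t - k + (2 * k + 1 - 2 * t) * (x - k) ≤ |(x : ℝ) - t| := by
  rcases le_or_gt x k with hx | hx
  · have hx' : (x : ℝ) ≤ k := by exact_mod_cast hx
    nlinarith [neg_abs_le ((x : ℝ) - t)]
  · have hx' : (k : ℝ) + 1 ≤ x := by exact_mod_cast hx
    nlinarith [le_abs_self ((x : ℝ) - t)]

theorem abs_natCast_sub_eq_secant (hk : (k : ℝ) ≤ t) (hk' : t ≤ k + 1) {x : ℕ}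
    (hx : x = k ∨ x = k + 1) :
    |(x : ℝ) - t| = t - k + (2 * k + 1 - 2 * t) * (x - k) := by
  rcases hx with rfl | rfl
  · rw [abs_of_nonpos (by linarith)]
    ring
  · push_cast
    rw [abs_of_nonneg (by linarith)]
    ring

end Secant

theorem eq_floor_or_eq_floor_add_one_of_eq_floor_or_eq_ceil {t : ℝ} {x : ℕ}
    (hx : x = ⌊t⌋₊ ∨ x = ⌈t⌉₊) : x = ⌊t⌋₊ ∨ x = ⌊t⌋₊ + 1 := by
  have := Nat.floor_le_ceil t
  have := Nat.ceil_le_floor_add_one t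
  omega

theorem abs_div_sub_one_div (x : ℝ) {m : ℝ} (hm : 0 < m) (n : ℝ) :
    |x / m - 1 / n| = |x - m / n| / m := by
  have h : x / m - 1 / n = (x - m / n) / m := by
    rw [sub_div, div_div, div_mul_cancel_right₀ hm.ne', one_div]
  rw [h, abs_div, abs_of_pos hm]

theorem stmt8_general {C : Type*} [Fintype C] (m : ℕ) (hm : 1 ≤ m)
    (qstar : C → ℕ) (hqstars : ∑ c, qstar c = m)
    (hbal : ∀ c, qstar c = ⌊(m : ℝ) / (Fintype.card C : ℝ)⌋₊ ∨
                 qstar c = ⌈(m : ℝ) / (Fintype.card C : ℝ)⌉₊)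
    (q : C → ℕ) (hqs : ∑ c, q c = m) :
    (1 / 2) * ∑ c, |(qstar c : ℝ) / m - 1 / (Fintype.card C : ℝ)| ≤
      (1 / 2) * ∑ c, |(q c : ℝ) / m - 1 / (Fintype.card C : ℝ)| := by
  set t : ℝ := (m : ℝ) / Fintype.card C
  set k := ⌊t⌋₊
  have hk : (k : ℝ) ≤ t := Nat.floor_le (by positivity)
  have hk' : t ≤ k + 1 := (Nat.lt_floor_add_one t).le
  set b : ℝ := 2 * k + 1 - 2 * t
  have hsum : ∑ c, |(qstar c : ℝ) - t| ≤ ∑ c, |(q c : ℝ) - t| := by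
    refine sum_le_sum_of_affine_minorant univ (fun x => |(x : ℝ) - t|) (t - k - b * k) b
      (fun x => by linarith [secant_le_abs_natCast_sub hk hk' x]) qstar q
      (fun c _ => ?_) (hqstars.trans hqs.symm)
    linarith [abs_natCast_sub_eq_secant hk hk'
      (eq_floor_or_eq_floor_add_one_of_eq_floor_or_eq_ceil (hbal c))]
  have hm0 : (0 : ℝ) < m := by exact_mod_cast hm
  simp only [abs_div_sub_one_div _ hm0, ← sum_div]
  gcongr

/-- Optimality of balanced allocation: among integer allocations `q` with budget `m`,
any allocation `q*` with each `q* c ∈ {⌊m/n⌋, ⌈m/n⌉}` minimizes the total variation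
distance of `q/m` to the uniform distribution on `C` (with `n = |C|`). -/
theorem stmt8 {C : Type*} [Fintype C] [Nonempty C] (m : ℕ) (hm : 1 ≤ m)
    (qstar : C → ℕ) (hqstars : ∑ c, qstar c = m)
    (hbal : ∀ c, qstar c = ⌊(m : ℝ) / (Fintype.card C : ℝ)⌋₊ ∨
                 qstar c = ⌈(m : ℝ) / (Fintype.card C : ℝ)⌉₊)
    (q : C → ℕ) (hqs : ∑ c, q c = m) :
    (1 / 2) * ∑ c, |(qstar c : ℝ) / m - 1 / (Fintype.card C : ℝ)| ≤
      (1 / 2) * ∑ c, |(q c : ℝ) / m - 1 / (Fintype.card C : ℝ)| :=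
  stmt8_general m hm qstar hqstars hbal q hqs
end

section
/- Let C be a finite set partitioned into strata {C_ℓ}_{ℓ∈Λ} with weights α_ℓ ≥ 0 summing to 1, and let q : C → ℕ be quotas with ∑_{c∈C_ℓ} q_c = m_ℓ for each ℓ and total ∑_ℓ m_ℓ = m' > 0. Define p(c) = q_c/m'. Suppose |m_ℓ − α_ℓ m'| ≤ 1 for all ℓ and within each stratum every q_c ∈ {⌊m_ℓ/|C_ℓ|⌋, ⌈m_ℓ/|C_ℓ|⌉}. Then 2·TV(p, μ*) ≤ |Λ|/m' + ∑_{ℓ∈Λ} |C_ℓ|/m', where μ* is the multi-scale target μ*({c}) = α_ℓ/|C_ℓ|. -/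
/-!
Route the error of each cell through the intermediate value `m ℓ / (|C_ℓ| m')`:
`q c / m' - α ℓ / |C_ℓ| = (q c - m ℓ / |C_ℓ|) / m' + (m ℓ - α ℓ m') / (|C_ℓ| m')`.
The balanced quota makes the first numerator at most `1` in absolute value and the rounded
level budget does the same for the second, so cell `c` contributes at most `(1 + |C_ℓ|⁻¹) / m'`.
Summed over the cells, the `1`'s give `|C| = ∑ ℓ |C_ℓ|` and the `|C_ℓ|⁻¹`'s give at most one
per stratum.
-/

open Finset

theorem abs_natCast_sub_le_one_of_eq_floor_or_ceil {R : Type*} [Ring R] [LinearOrder R]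
    [IsStrictOrderedRing R] [FloorSemiring R] {q : ℕ} {x : R} (hx : 0 ≤ x)
    (hq : q = ⌊x⌋₊ ∨ q = ⌈x⌉₊) : |(q : R) - x| ≤ 1 := by
  rcases hq with rfl | rfl
  exacts [Nat.abs_floor_sub_le hx, Nat.abs_ceil_sub_le hx]

theorem abs_div_sub_div_le_two_stage {K : Type*} [Field K] [LinearOrder K]
    [IsStrictOrderedRing K] {q m a M n : K} (hM : 0 < M) (hn : 0 < n) :
    |q / M - a / n| ≤ (|q - m / n| + |m - a * M| / n) / M := by
  have hsplit : q / M - a / n = (q - m / n) / M + (m - a * M) / n / M := by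
    field_simp
    ring
  rw [hsplit, add_div]
  refine (abs_add_le _ _).trans_eq ?_
  rw [abs_div, abs_div, abs_div, abs_of_pos hM, abs_of_pos hn]

theorem abs_quota_div_sub_target_le {q m n M : ℕ} {a : ℝ} (hM : 0 < M) (hn : 0 < n)
    (hq : q = ⌊(m : ℝ) / n⌋₊ ∨ q = ⌈(m : ℝ) / n⌉₊) (hm : |(m : ℝ) - a * M| ≤ 1) :
    |(q : ℝ) / M - a / n| ≤ (1 + (n : ℝ)⁻¹) / M := by
  have hnR : (0 : ℝ) < n := by exact_mod_cast hn
  have hq' := abs_natCast_sub_le_one_of_eq_floor_or_ceil (by positivity) hq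
  calc |(q : ℝ) / M - a / n| ≤ (|(q : ℝ) - m / n| + |(m : ℝ) - a * M| / n) / M :=
        abs_div_sub_div_le_two_stage (by exact_mod_cast hM) hnR
    _ ≤ (1 + 1 / n) / M := by gcongr
    _ = (1 + (n : ℝ)⁻¹) / M := by rw [one_div]

section Strata

variable {C Λ : Type*} [Fintype C] [Fintype Λ] [DecidableEq Λ] (σ : C → Λ)

theorem sum_card_stratum_eq_card :
    ∑ ℓ, ((univ.filter fun c => σ c = ℓ).card : ℝ) = Fintype.card C := by
  rw [← Nat.cast_sum, ← card_eq_sum_card_fiberwise fun c _ => mem_univ (σ c), card_univ]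

theorem sum_inv_card_stratum_le :
    ∑ c, ((univ.filter fun c' => σ c' = σ c).card : ℝ)⁻¹ ≤ Fintype.card Λ := by
  rw [← sum_fiberwise univ σ]
  calc ∑ ℓ, ∑ c ∈ univ.filter (fun c => σ c = ℓ),
        ((univ.filter fun c' => σ c' = σ c).card : ℝ)⁻¹
      = ∑ ℓ, ((univ.filter fun c => σ c = ℓ).card : ℝ) *
          ((univ.filter fun c => σ c = ℓ).card : ℝ)⁻¹ := by
        refine sum_congr rfl fun ℓ _ => ?_
        rw [sum_congr rfl fun c hc => by rw [(mem_filter.1 hc).2], sum_const, nsmul_eq_mul]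
    _ ≤ ∑ _ℓ : Λ, (1 : ℝ) := sum_le_sum fun ℓ _ => mul_inv_le_one
    _ = Fintype.card Λ := by simp

end Strata

theorem stmt19_general {C Λ : Type*} [Fintype C] [Fintype Λ] [DecidableEq Λ]
    (σ : C → Λ)
    (α : Λ → ℝ)
    (q : C → ℕ) (m : Λ → ℕ) (m' : ℕ) (hm' : 0 < m')
    (hinter : ∀ ℓ, |(m ℓ : ℝ) - α ℓ * (m' : ℝ)| ≤ 1)
    (hintra : ∀ c, q c = ⌊(m (σ c) : ℝ) /
        ((Finset.univ.filter (fun c' => σ c' = σ c)).card : ℝ)⌋₊ ∨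
      q c = ⌈(m (σ c) : ℝ) /
        ((Finset.univ.filter (fun c' => σ c' = σ c)).card : ℝ)⌉₊) :
    2 * ((1 / 2) * ∑ c, |(q c : ℝ) / (m' : ℝ) -
        α (σ c) / ((Finset.univ.filter (fun c' => σ c' = σ c)).card : ℝ)|) ≤
      (Fintype.card Λ : ℝ) / (m' : ℝ) +
        ∑ ℓ, ((Finset.univ.filter (fun c' => σ c' = ℓ)).card : ℝ) / (m' : ℝ) := by
  have hcell : ∀ c, |(q c : ℝ) / m' - α (σ c) / (univ.filter fun c' => σ c' = σ c).card| ≤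
      (1 + ((univ.filter fun c' => σ c' = σ c).card : ℝ)⁻¹) / m' := fun c =>
    abs_quota_div_sub_target_le hm' (card_pos.2 ⟨c, mem_filter.2 ⟨mem_univ c, rfl⟩⟩)
      (hintra c) (hinter (σ c))
  calc 2 * ((1 / 2) * ∑ c, |(q c : ℝ) / m' - α (σ c) / (univ.filter fun c' => σ c' = σ c).card|)
      = ∑ c, |(q c : ℝ) / m' - α (σ c) / (univ.filter fun c' => σ c' = σ c).card| := by ring
    _ ≤ ∑ c, (1 + ((univ.filter fun c' => σ c' = σ c).card : ℝ)⁻¹) / m' :=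
      sum_le_sum fun c _ => hcell c
    _ = (Fintype.card C + ∑ c, ((univ.filter fun c' => σ c' = σ c).card : ℝ)⁻¹) / m' := by
      rw [← sum_div, sum_add_distrib, sum_const, card_univ, nsmul_one]
    _ ≤ (Fintype.card Λ + Fintype.card C) / m' := by
      rw [add_comm (Fintype.card Λ : ℝ)]
      gcongr
      exact sum_inv_card_stratum_le σ
    _ = (Fintype.card Λ : ℝ) / m' + ∑ ℓ, ((univ.filter fun c' => σ c' = ℓ).card : ℝ) / m' := by
      rw [← sum_div, sum_card_stratum_eq_card, add_div]

/-- Explicit finite-budget guarantee for the two-stage allocation: if the level budgets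
`m ℓ` match `α ℓ m'` within `1` and within each stratum every quota is `⌊m ℓ/|C_ℓ|⌋` or
`⌈m ℓ/|C_ℓ|⌉`, then `2 TV(p, μ*) ≤ |Λ|/m' + ∑_ℓ |C_ℓ|/m'` for `p(c) = q c / m'`. -/
theorem stmt19 {C Λ : Type*} [Fintype C] [Fintype Λ] [DecidableEq Λ]
    (σ : C → Λ) (hsurj : ∀ ℓ : Λ, ∃ c, σ c = ℓ)
    (α : Λ → ℝ) (hα : ∀ ℓ, 0 ≤ α ℓ) (hαs : ∑ ℓ, α ℓ = 1)
    (q : C → ℕ) (m : Λ → ℕ) (m' : ℕ) (hm' : 0 < m')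
    (hlev : ∀ ℓ, ∑ c ∈ Finset.univ.filter (fun c' => σ c' = ℓ), q c = m ℓ)
    (htot : ∑ ℓ, m ℓ = m')
    (hinter : ∀ ℓ, |(m ℓ : ℝ) - α ℓ * (m' : ℝ)| ≤ 1)
    (hintra : ∀ c, q c = ⌊(m (σ c) : ℝ) /
        ((Finset.univ.filter (fun c' => σ c' = σ c)).card : ℝ)⌋₊ ∨
      q c = ⌈(m (σ c) : ℝ) /
        ((Finset.univ.filter (fun c' => σ c' = σ c)).card : ℝ)⌉₊) :
    2 * ((1 / 2) * ∑ c, |(q c : ℝ) / (m' : ℝ) -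
        α (σ c) / ((Finset.univ.filter (fun c' => σ c' = σ c)).card : ℝ)|) ≤
      (Fintype.card Λ : ℝ) / (m' : ℝ) +
        ∑ ℓ, ((Finset.univ.filter (fun c' => σ c' = ℓ)).card : ℝ) / (m' : ℝ) :=
  stmt19_general σ α q m m' hm' hinter hintra
end
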